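/- arXiv:1907.00961 — 2 statements merged into one kernel-verified Lean document; each statement's English description precedes it below -/
import Mathlib

section
/- If y : ℝ → ℝ is twice differentiable on t > 0 and satisfies t^2 y'' + 4t y' + 2y = (2ty + t^2 y')^{1/2} with 2ty + t^2 y' ≥ 0, then for a b : ℝ with e^a t + b > 0 on the relevant domain, the function ŷ defined by ŷ(t̂) = e^{3a} t^2 y(t) / (e^a t + b)^2 where t̂ = e^a t + b satisfies t̂^2 ŷ'' + 4 t̂ ŷ' + 2 ŷ = (2 t̂ ŷ + t̂^2 ŷ')^{1/2}. -/
/-!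
Writing `u(t) = t² y(t)`, the equation says `u'' = √u'`, because
`(t² y)' = 2ty + t²y'` and `(t² y)'' = t²y'' + 4ty' + 2y`. The transformed function satisfies
`t̂² ŷ(t̂) = e^{3a} u(e^{-a}(t̂ - b))`, so the chain rule multiplies `u'` by `e^{2a}` and `u''` by
`e^{a}`, and `√(e^{2a} u') = e^{a} √u'`.
-/

open Filter Topology

section
variable {𝕜 : Type*} [NontriviallyNormedField 𝕜] {f U U' : 𝕜 → 𝕜} {f' u U'' x : 𝕜}

theorem hasDerivAt_sq_mul (hf : DifferentiableAt 𝕜 f x) :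
    HasDerivAt (fun x => x ^ 2 * f x) (2 * x * f x + x ^ 2 * deriv f x) x := by
  simpa using (hasDerivAt_pow 2 x).fun_mul hf.hasDerivAt

theorem hasDerivAt_two_mul_mul_add_sq_mul_deriv (hf : DifferentiableAt 𝕜 f x)
    (hf' : DifferentiableAt 𝕜 (deriv f) x) :
    HasDerivAt (fun x => 2 * x * f x + x ^ 2 * deriv f x)
      (x ^ 2 * deriv (deriv f) x + 4 * x * deriv f x + 2 * f x) x :=
  ((((hasDerivAt_id' x).const_mul 2).fun_mul hf.hasDerivAt).fun_add
    (hasDerivAt_sq_mul hf')).congr_deriv (by ring)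

theorem HasDerivAt.const_mul_comp_sub_mul (E b c : 𝕜) (hf : HasDerivAt f f' ((x - b) * c)) :
    HasDerivAt (fun x => E * f ((x - b) * c)) (E * c * f') x :=
  ((hf.comp x (((hasDerivAt_id' x).sub_const b).mul_const c)).const_mul E).congr_deriv
    (by ring)

theorem hasDerivAt_div_sq (hU : HasDerivAt U u x) (hx : x ≠ 0) :
    HasDerivAt (fun x => U x / x ^ 2) (u / x ^ 2 - 2 * U x / x ^ 3) x :=
  (hU.fun_div (hasDerivAt_pow 2 x) (pow_ne_zero 2 hx)).congr_deriv (by field_simp; ring)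

theorem two_mul_div_sq_add_sq_mul_deriv_div_sq (hU : HasDerivAt U u x) (hx : x ≠ 0) :
    2 * x * (U x / x ^ 2) + x ^ 2 * deriv (fun x => U x / x ^ 2) x = u := by
  rw [(hasDerivAt_div_sq hU hx).deriv]
  field_simp
  ring

theorem sq_mul_deriv_deriv_div_sq_add (hU : ∀ᶠ z in 𝓝 x, HasDerivAt U (U' z) z)
    (hU' : HasDerivAt U' U'' x) (hx : x ≠ 0) :
    x ^ 2 * deriv (deriv fun z => U z / z ^ 2) x + 4 * x * deriv (fun z => U z / z ^ 2) x
      + 2 * (U x / x ^ 2) = U'' := by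
  have hderiv : deriv (fun z => U z / z ^ 2) =ᶠ[𝓝 x] fun z => U' z / z ^ 2 - 2 * U z / z ^ 3 := by
    filter_upwards [hU, eventually_ne_nhds hx] with z hUz hz
    exact (hasDerivAt_div_sq hUz hz).deriv
  have h2 : HasDerivAt (fun z => U' z / z ^ 2 - 2 * U z / z ^ 3)
      (U'' / x ^ 2 - 2 * U' x / x ^ 3 - (2 * U' x / x ^ 3 - 6 * U x / x ^ 4)) x := by
    refine ((hasDerivAt_div_sq hU' hx).fun_sub ((hU.self_of_nhds.const_mul 2).fun_div
      (hasDerivAt_pow 3 x) (pow_ne_zero 3 hx))).congr_deriv ?_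
    field_simp
    ring
  rw [hderiv.deriv_eq, h2.deriv, (hasDerivAt_div_sq hU.self_of_nhds hx).deriv]
  field_simp
  ring

end

theorem derivs_of_rescaled_div_sq {y Y : ℝ → ℝ} {E b c s t : ℝ}
    (hy : ∀ t > 0, DifferentiableAt ℝ y t) (hy' : DifferentiableAt ℝ (deriv y) t)
    (hY : Y = fun x => E * (((x - b) * c) ^ 2 * y ((x - b) * c)) / x ^ 2)
    (hts : (s - b) * c = t) (ht : 0 < t) (hs : s ≠ 0) :
    2 * s * Y s + s ^ 2 * deriv Y s = E * c * (2 * t * y t + t ^ 2 * deriv y t) ∧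
      s ^ 2 * deriv (deriv Y) s + 4 * s * deriv Y s + 2 * Y s =
        E * c * c * (t ^ 2 * deriv (deriv y) t + 4 * t * deriv y t + 2 * y t) := by
  have hpos : ∀ᶠ x in 𝓝 s, 0 < (x - b) * c :=
    (isOpen_lt continuous_const (by fun_prop)).mem_nhds (show 0 < (s - b) * c from hts ▸ ht)
  have hU : ∀ᶠ x in 𝓝 s, HasDerivAt (fun x => E * (((x - b) * c) ^ 2 * y ((x - b) * c)))
      (E * c * (2 * ((x - b) * c) * y ((x - b) * c) + ((x - b) * c) ^ 2 * deriv y ((x - b) * c)))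
      x := by
    filter_upwards [hpos] with x hx
    exact (hasDerivAt_sq_mul (hy _ hx)).const_mul_comp_sub_mul E b c
  have hU' : HasDerivAt (fun x => E * c *
        (2 * ((x - b) * c) * y ((x - b) * c) + ((x - b) * c) ^ 2 * deriv y ((x - b) * c)))
      (E * c * c * (t ^ 2 * deriv (deriv y) t + 4 * t * deriv y t + 2 * y t)) s := by
    have h := hasDerivAt_two_mul_mul_add_sq_mul_deriv (hy t ht) hy'
    rw [← hts] at h ⊢
    exact h.const_mul_comp_sub_mul (E * c) b c
  subst hY
  constructor
  · rw [two_mul_div_sq_add_sq_mul_deriv_div_sq hU.self_of_nhds hs, hts]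
  · exact sq_mul_deriv_deriv_div_sq_add hU hU' hs

theorem stmt_8_general (y : ℝ → ℝ)
    (hy1 : ∀ t > (0:ℝ), DifferentiableAt ℝ y t)
    (hy2 : ∀ t > (0:ℝ), DifferentiableAt ℝ (deriv y) t)
    (hode : ∀ t > (0:ℝ), t ^ 2 * deriv (deriv y) t + 4 * t * deriv y t + 2 * y t =
        Real.sqrt (2 * t * y t + t ^ 2 * deriv y t))
    (a b : ℝ)
    (hdom : ∀ t > (0:ℝ), 0 < Real.exp a * t + b) :
    ∀ t > (0:ℝ),
      let Yhat : ℝ → ℝ := fun s =>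
        Real.exp (3 * a) * ((s - b) * Real.exp (-a)) ^ 2 *
          y ((s - b) * Real.exp (-a)) / s ^ 2
      let s := Real.exp a * t + b
      s ^ 2 * deriv (deriv Yhat) s + 4 * s * deriv Yhat s + 2 * Yhat s =
        Real.sqrt (2 * s * Yhat s + s ^ 2 * deriv Yhat s) := by
  intro t ht Yhat s
  have hts : (s - b) * Real.exp (-a) = t := by
    simp only [s, add_sub_cancel_right, mul_comm _ t, mul_assoc, ← Real.exp_add,
      add_neg_cancel, Real.exp_zero, mul_one]
  obtain ⟨hfirst, hsecond⟩ := derivs_of_rescaled_div_sq (E := Real.exp (3 * a)) hy1 (hy2 t ht)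
    (show Yhat = _ by simp only [Yhat, mul_assoc]) hts ht (hdom t ht).ne'
  have hEc : Real.exp (3 * a) * Real.exp (-a) = Real.exp a ^ 2 := by
    rw [← Real.exp_add, sq, ← Real.exp_add]
    ring_nf
  have hEcc : Real.exp (3 * a) * Real.exp (-a) * Real.exp (-a) = Real.exp a := by
    rw [hEc, sq, mul_assoc, ← Real.exp_add, add_neg_cancel, Real.exp_zero, mul_one]
  rw [hfirst, hsecond, hode t ht, hEcc, hEc, Real.sqrt_mul (sq_nonneg _),
    Real.sqrt_sq (Real.exp_pos a).le]

theorem stmt_8 (y : ℝ → ℝ)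
    (hy1 : ∀ t > (0:ℝ), DifferentiableAt ℝ y t)
    (hy2 : ∀ t > (0:ℝ), DifferentiableAt ℝ (deriv y) t)
    (hode : ∀ t > (0:ℝ), t ^ 2 * deriv (deriv y) t + 4 * t * deriv y t + 2 * y t =
        Real.sqrt (2 * t * y t + t ^ 2 * deriv y t))
    (hnn : ∀ t > (0:ℝ), 0 ≤ 2 * t * y t + t ^ 2 * deriv y t)
    (a b : ℝ)
    (hdom : ∀ t > (0:ℝ), 0 < Real.exp a * t + b) :
    ∀ t > (0:ℝ),
      let Yhat : ℝ → ℝ := fun s =>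
        Real.exp (3 * a) * ((s - b) * Real.exp (-a)) ^ 2 *
          y ((s - b) * Real.exp (-a)) / s ^ 2
      let s := Real.exp a * t + b
      s ^ 2 * deriv (deriv Yhat) s + 4 * s * deriv Yhat s + 2 * Yhat s =
        Real.sqrt (2 * s * Yhat s + s ^ 2 * deriv Yhat s) :=
  stmt_8_general y hy1 hy2 hode a b hdom
end

section
/- Let u, v : ℝ → ℝ be differentiable with u nonvanishing, satisfying v' = u^{-3} and u' = v. For α, β, γ, δ with αδ - βγ = 1 and γt + δ > 0 on the domain, define t̂ = (αt+β)/(γt+δ), û(t̂) = u(t)/(γt+δ), v̂(t̂) = (γt+δ)v(t) - γu(t). Then dv̂/dt̂ = û^{-3} and dû/dt̂ = v̂. -/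
/-!
The inverse of the Möbius map `t ↦ (αt+β)/(γt+δ)` is `s ↦ (δs-β)/(α-γs)`, whose derivative at the image
of `t` is `(γt+δ)²`. The chain rule then gives `dû/dt̂ = (γt+δ)v - γu = v̂`, and in `dv̂/dt̂` the two
`γ v` terms cancel, leaving `(γt+δ)³ u⁻³ = û⁻³`.
-/

theorem hasDerivAt_mobius {a b c d s : ℝ} (hs : c * s + d ≠ 0) :
    HasDerivAt (fun x => (a * x + b) / (c * x + d)) ((a * d - b * c) / (c * s + d) ^ 2) s := by
  have hnum : HasDerivAt (fun x => a * x + b) a s := by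
    simpa using ((hasDerivAt_id s).const_mul a).add_const b
  have hden : HasDerivAt (fun x => c * x + d) c s := by
    simpa using ((hasDerivAt_id s).const_mul c).add_const d
  exact (hnum.div hden hs).congr_deriv (by ring)

section MobiusInverse

variable {α β γ δ t : ℝ}

theorem mobius_inverse_denom (hdet : α * δ - β * γ = 1) (ht : γ * t + δ ≠ 0) :
    α - γ * ((α * t + β) / (γ * t + δ)) = (γ * t + δ)⁻¹ := by
  field_simp
  linear_combination hdet

theorem mobius_inverse_apply (hdet : α * δ - β * γ = 1) (ht : γ * t + δ ≠ 0) :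
    (δ * ((α * t + β) / (γ * t + δ)) - β) / (α - γ * ((α * t + β) / (γ * t + δ))) = t := by
  rw [mobius_inverse_denom hdet ht, div_inv_eq_mul, sub_mul, mul_assoc, div_mul_cancel₀ _ ht]
  linear_combination t * hdet

theorem hasDerivAt_mobius_inverse (hdet : α * δ - β * γ = 1) (ht : γ * t + δ ≠ 0) :
    HasDerivAt (fun s => (δ * s - β) / (α - γ * s)) ((γ * t + δ) ^ 2)
      ((α * t + β) / (γ * t + δ)) := by
  set s₀ := (α * t + β) / (γ * t + δ)
  have hden : -γ * s₀ + α = (γ * t + δ)⁻¹ := by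
    rw [← mobius_inverse_denom hdet ht]; ring
  have h := hasDerivAt_mobius (a := δ) (b := -β) (s := s₀) (hden ▸ inv_ne_zero ht)
  rw [hden, show δ * α - -β * -γ = 1 by linear_combination hdet, one_div, inv_pow, inv_inv] at h
  convert h using 2 with s
  ring

end MobiusInverse

section Reparametrization

variable {u v ψ : ℝ → ℝ} {γ δ s t : ℝ}

theorem hasDerivAt_div_reparam (hu : HasDerivAt u (v t) t)
    (hψ : HasDerivAt ψ ((γ * t + δ) ^ 2) s) (hψs : ψ s = t) (ht : γ * t + δ ≠ 0) :
    HasDerivAt (fun x => u (ψ x) / (γ * ψ x + δ)) ((γ * t + δ) * v t - γ * u t) s := by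
  subst hψs
  refine ((hu.comp s hψ).div ((hψ.const_mul γ).add_const δ) ht).congr_deriv ?_
  rw [Function.comp_apply]
  field_simp

theorem hasDerivAt_reparam_conj {w : ℝ} (hu : HasDerivAt u (v t) t) (hv : HasDerivAt v w t)
    (hψ : HasDerivAt ψ ((γ * t + δ) ^ 2) s) (hψs : ψ s = t) :
    HasDerivAt (fun x => (γ * ψ x + δ) * v (ψ x) - γ * u (ψ x)) ((γ * t + δ) ^ 3 * w) s := by
  subst hψs
  refine ((((hψ.const_mul γ).add_const δ).mul (hv.comp s hψ)).sub
    ((hu.comp s hψ).const_mul γ)).congr_deriv ?_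
  rw [Function.comp_apply]
  ring

end Reparametrization

theorem stmt_15_general (u v : ℝ → ℝ)
    (hdu : Differentiable ℝ u) (hdv : Differentiable ℝ v)
    (hv' : ∀ t, deriv v t = (u t ^ 3)⁻¹)
    (hu' : ∀ t, deriv u t = v t)
    (α β γ δ : ℝ) (hdet : α * δ - β * γ = 1) :
    let ψ : ℝ → ℝ := fun s => (δ * s - β) / (α - γ * s)
    let Uhat : ℝ → ℝ := fun s => u (ψ s) / (γ * ψ s + δ)
    let Vhat : ℝ → ℝ := fun s => (γ * ψ s + δ) * v (ψ s) - γ * u (ψ s)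
    ∀ t, 0 < γ * t + δ →
      deriv Vhat ((α * t + β) / (γ * t + δ)) =
        (Uhat ((α * t + β) / (γ * t + δ)) ^ 3)⁻¹ ∧
      deriv Uhat ((α * t + β) / (γ * t + δ)) =
        Vhat ((α * t + β) / (γ * t + δ)) := by
  intro ψ Uhat Vhat t hpos
  have ht : γ * t + δ ≠ 0 := hpos.ne'
  have hψ := hasDerivAt_mobius_inverse hdet ht
  have hψs : ψ ((α * t + β) / (γ * t + δ)) = t := mobius_inverse_apply hdet ht
  have hu : HasDerivAt u (v t) t := hu' t ▸ (hdu t).hasDerivAt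
  have hv : HasDerivAt v (u t ^ 3)⁻¹ t := hv' t ▸ (hdv t).hasDerivAt
  constructor
  · rw [(hasDerivAt_reparam_conj hu hv hψ hψs).deriv]
    simp only [Uhat, hψs]
    field_simp
  · rw [(hasDerivAt_div_reparam hu hψ hψs ht).deriv]
    simp only [Vhat, hψs]

theorem stmt_15 (u v : ℝ → ℝ)
    (hdu : Differentiable ℝ u) (hdv : Differentiable ℝ v)
    (hu : ∀ t, u t ≠ 0)
    (hv' : ∀ t, deriv v t = (u t ^ 3)⁻¹)
    (hu' : ∀ t, deriv u t = v t)
    (α β γ δ : ℝ) (hdet : α * δ - β * γ = 1) :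
    let ψ : ℝ → ℝ := fun s => (δ * s - β) / (α - γ * s)
    let Uhat : ℝ → ℝ := fun s => u (ψ s) / (γ * ψ s + δ)
    let Vhat : ℝ → ℝ := fun s => (γ * ψ s + δ) * v (ψ s) - γ * u (ψ s)
    ∀ t, 0 < γ * t + δ →
      deriv Vhat ((α * t + β) / (γ * t + δ)) =
        (Uhat ((α * t + β) / (γ * t + δ)) ^ 3)⁻¹ ∧
      deriv Uhat ((α * t + β) / (γ * t + δ)) =
        Vhat ((α * t + β) / (γ * t + δ)) :=
  stmt_15_general u v hdu hdv hv' hu' α β γ δ hdet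
end
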